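/- arXiv:0811.3701 — 3 statements merged into one kernel-verified Lean document; each statement's English description precedes it below -/
import Mathlib

section
/- Fix a positive integer n and let S = { k : 1 ≤ k ≤ n and ⌊n/(k+1)⌋ < ⌊n/k⌋ }. If n < ⌊√n⌋² + ⌊√n⌋ then #S = 2⌊√n⌋ − 1, and if n ≥ ⌊√n⌋² + ⌊√n⌋ then #S = 2⌊√n⌋. -/
/-! For `1 ≤ k ≤ n`, `k` is a jump point of `k ↦ n / k` exactly when `k` is the largest `j` with
`n / j = n / k`, i.e. when `n / (n / k) = k`; so the jump points are the values `n / v`, and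
`v ↦ n / v` is injective on `[1, s]`, `s = ⌊√n⌋`, as each `v ≤ s` is itself a jump point.
Hence the jump points are `[1, K]` together with the `s` values `n / v`, `v ≤ s`, which all
exceed `K`, where `K = s` if `n / s > s` (that is, `s² + s ≤ n`) and `K = s - 1` if `n / s = s`. -/

open Finset

def divJumps (n : ℕ) : Finset ℕ := (Icc 1 n).filter (fun k => n / (k + 1) < n / k)

section

variable {n k v m K : ℕ}

theorem div_succ_lt_div_of_mul_self_le (hk : 0 < k) (h : k * k ≤ n) :
    n / (k + 1) < n / k := by
  have hq : k ≤ n / k := (Nat.le_div_iff_mul_le hk).mpr h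
  by_contra! hle
  have hsucc : (n / k + 1) * k ≤ n := by
    have := (Nat.le_div_iff_mul_le (Nat.add_one_pos k)).mp hle
    nlinarith
  have := (Nat.le_div_iff_mul_le hk).mpr hsucc
  omega

theorem div_div_eq_of_div_succ_lt (h : n / (k + 1) < n / k) : n / (n / k) = k := by
  have hq : 0 < n / k := Nat.zero_lt_of_lt h
  have hle : k ≤ n / (n / k) := (Nat.le_div_iff_mul_le hq).mpr (Nat.mul_div_le n k)
  have hlt : n / (n / k) < k + 1 := by
    by_contra! hge
    have := (Nat.le_div_iff_mul_le (Nat.add_one_pos k)).mpr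
      (Nat.mul_comm (n / k) (k + 1) ▸ (Nat.le_div_iff_mul_le hq).mp hge)
    omega
  omega

theorem div_div_eq_of_mul_self_le (hk : 0 < k) (h : k * k ≤ n) : n / (n / k) = k :=
  div_div_eq_of_div_succ_lt (div_succ_lt_div_of_mul_self_le hk h)

theorem div_div_succ_lt_div_div (hv : 0 < n / v) : n / (n / v + 1) < n / (n / v) := by
  have hv0 : 0 < v := (Nat.div_pos_iff.mp hv).1
  have hle : v ≤ n / (n / v) := (Nat.le_div_iff_mul_le hv).mpr (Nat.mul_div_le n v)
  have hlt : n / (n / v + 1) < v := (Nat.div_lt_iff_lt_mul (Nat.add_one_pos _)).mpr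
    (Nat.mul_comm v _ ▸ Nat.lt_mul_div_succ n hv0)
  omega

theorem mem_divJumps : k ∈ divJumps n ↔ n / (k + 1) < n / k := by
  refine ⟨fun hk => (mem_filter.mp hk).2, fun h => mem_filter.mpr ⟨?_, h⟩⟩
  exact mem_Icc.mpr (Nat.div_pos_iff.mp (Nat.zero_lt_of_lt h))

theorem divJumps_eq_union (hm : m * m ≤ n) (hKm : K ≤ m) (hK : n / (K + 1) ≤ m) :
    divJumps n = Icc 1 K ∪ (Icc 1 m).image (n / ·) := by
  ext k
  simp only [mem_divJumps, mem_union, mem_Icc, mem_image]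
  constructor
  · intro h
    have hk := Nat.div_pos_iff.mp (Nat.zero_lt_of_lt h)
    by_cases hkK : k ≤ K
    · exact Or.inl ⟨hk.1, hkK⟩
    · refine Or.inr ⟨n / k, ⟨Nat.zero_lt_of_lt h, ?_⟩, div_div_eq_of_div_succ_lt h⟩
      exact (Nat.div_le_div_left (by omega) (by omega)).trans hK
  · rintro (⟨hk, hkK⟩ | ⟨v, ⟨hv, hvm⟩, rfl⟩)
    · exact div_succ_lt_div_of_mul_self_le hk (le_trans (Nat.mul_le_mul (by omega) (by omega)) hm)
    · exact div_div_succ_lt_div_div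
        (Nat.div_pos_iff.mpr ⟨hv, hvm.trans ((Nat.le_mul_self m).trans hm)⟩)

theorem card_divJumps (hm : m * m ≤ n) (hKm : K ≤ m) (hK : n / (K + 1) ≤ m)
    (hKn : K + 1 ≤ n / m) : #(divJumps n) = K + m := by
  have hdisj : Disjoint (Icc 1 K) ((Icc 1 m).image (n / ·)) := by
    simp only [disjoint_left, mem_Icc, mem_image, not_exists, not_and]
    rintro _ ⟨-, hkK⟩ v ⟨hv, hvm⟩ rfl
    have := Nat.div_le_div_left hvm hv (a := n)
    omega
  have hinj : Set.InjOn (n / ·) (Icc 1 m : Set ℕ) := Set.LeftInvOn.injOn (f₁' := (n / ·))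
    fun v hv => by
      obtain ⟨hv, hvm⟩ := mem_Icc.mp (mem_coe.mp hv)
      exact div_div_eq_of_mul_self_le hv ((Nat.mul_le_mul hvm hvm).trans hm)
  rw [divJumps_eq_union hm hKm hK, card_union_of_disjoint hdisj, card_image_of_injOn hinj,
    Nat.card_Icc, Nat.card_Icc, Nat.add_sub_cancel, Nat.add_sub_cancel]

end

theorem card_S (n : ℕ) (hn : 0 < n)
    (S : Finset ℕ) (hS : S = (Finset.Icc 1 n).filter (fun k => n / (k + 1) < n / k)) :
    (n < Nat.sqrt n ^ 2 + Nat.sqrt n → S.card = 2 * Nat.sqrt n - 1) ∧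
    (Nat.sqrt n ^ 2 + Nat.sqrt n ≤ n → S.card = 2 * Nat.sqrt n) := by
  change S = divJumps n at hS
  subst hS
  set s := Nat.sqrt n
  have hsq : s * s ≤ n := Nat.sqrt_le n
  have hsq' : n < (s + 1) * (s + 1) := Nat.lt_succ_sqrt n
  have hs : 0 < s := Nat.sqrt_pos.mpr hn
  rw [sq]
  constructor
  · intro hlt
    have hns : n / s = s := by
      refine le_antisymm ?_ ((Nat.le_div_iff_mul_le hs).mpr hsq)
      exact Nat.lt_succ_iff.mp ((Nat.div_lt_iff_lt_mul hs).mpr (by nlinarith))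
    rw [card_divJumps (K := s - 1) hsq (by omega) (by rw [Nat.sub_add_cancel hs, hns])
      (by omega)]
    omega
  · intro hle
    rw [card_divJumps (K := s) hsq le_rfl
      (Nat.lt_succ_iff.mp ((Nat.div_lt_iff_lt_mul (by omega)).mpr hsq'))
      ((Nat.le_div_iff_mul_le hs).mpr (by nlinarith))]
    omega
end

section
/- For every positive integer n, the cardinality of S = { k : 1 ≤ k ≤ n and ⌊n/(k+1)⌋ < ⌊n/k⌋ } equals ⌊√n⌋ + ⌊√(n + 1/4) − 1/2⌋. -/
open Finset

private lemma drop_lemma {n k : ℕ} (hk : 0 < k) (h : k * (k + 1) ≤ n) :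
    n / (k + 1) < n / k := by
  have h1 : k ≤ n / (k + 1) := (Nat.le_div_iff_mul_le (by omega)).mpr h
  have h2 : n / (k + 1) * (k + 1) ≤ n := Nat.div_mul_le_self n (k + 1)
  have h3 : (n / (k + 1) + 1) * k ≤ n := by nlinarith
  have := (Nat.le_div_iff_mul_le hk).mpr h3
  omega

private lemma div_div_le {n w : ℕ} (hw : 0 < w) (hwn : w ≤ n) : w ≤ n / (n / w) := by
  have hk : 0 < n / w := (Nat.one_le_div_iff hw).mpr hwn
  rw [Nat.le_div_iff_mul_le hk]
  have := Nat.div_mul_le_self n w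
  nlinarith

private lemma div_div_eq {n w : ℕ} (hw : 0 < w) (h : w * (w + 1) ≤ n) :
    n / (n / w) = w := by
  have hwn : w ≤ n := by nlinarith
  have h1 : w + 1 ≤ n / w := (Nat.le_div_iff_mul_le hw).mpr (by linarith)
  have h2 : w ≤ n / (n / w) := div_div_le hw hwn
  have h3 : n / (n / w) < w + 1 := by
    rw [Nat.div_lt_iff_lt_mul (by omega)]
    have hmod := Nat.div_add_mod n w
    have hlt : n % w < w := Nat.mod_lt n hw
    nlinarith
  omega

private lemma mem_div_set {n v : ℕ} (hv1 : 1 ≤ v) (hv2 : v ≤ n) :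
    1 ≤ n / v ∧ n / v ≤ n ∧ n / (n / v + 1) < n / (n / v) := by
  have hk1 : 1 ≤ n / v := (Nat.one_le_div_iff (by omega)).mpr hv2
  have hk2 : n / v ≤ n := Nat.div_le_self n v
  refine ⟨hk1, hk2, ?_⟩
  have hub : n / (n / v + 1) < v := by
    rw [Nat.div_lt_iff_lt_mul (by omega)]
    have hmod := Nat.div_add_mod n v
    have hlt : n % v < v := Nat.mod_lt n (by omega)
    nlinarith
  have hlb : v ≤ n / (n / v) := div_div_le (by omega) hv2
  omega

private lemma eq_div_div {n k : ℕ} (hk1 : 1 ≤ k) (hk2 : k ≤ n)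
    (h : n / (k + 1) < n / k) : k = n / (n / k) := by
  have hv1 : 1 ≤ n / k := (Nat.one_le_div_iff (by omega)).mpr hk2
  have hle : k ≤ n / (n / k) := div_div_le (by omega) hk2
  have hge : n / (n / k) ≤ k := by
    by_contra hc
    push_neg at hc
    have h4 : (k + 1) * (n / k) ≤ n := (Nat.le_div_iff_mul_le (by omega)).mp (by omega)
    have : n / k ≤ n / (k + 1) := (Nat.le_div_iff_mul_le (by omega)).mpr (by linarith)
    omega
  omega

private lemma S_eq_image (n : ℕ) (hn : 0 < n) :
    (Finset.Icc 1 n).filter (fun k => n / (k + 1) < n / k) =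
      (Finset.Icc 1 n).image (fun v => n / v) := by
  ext k
  simp only [mem_filter, mem_image, mem_Icc]
  constructor
  · rintro ⟨⟨h1, h2⟩, h3⟩
    exact ⟨n / k, ⟨(Nat.one_le_div_iff (by omega)).mpr h2, Nat.div_le_self n k⟩,
      (eq_div_div h1 h2 h3).symm⟩
  · rintro ⟨v, ⟨hv1, hv2⟩, rfl⟩
    obtain ⟨a, b, c⟩ := mem_div_set hv1 hv2
    exact ⟨⟨a, b⟩, c⟩

private lemma floor_aux (n m : ℕ) (h1 : m * (m + 1) ≤ n) (h2 : n < (m + 1) * (m + 2)) :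
    ⌊Real.sqrt ((n : ℝ) + 1 / 4) - 1 / 2⌋ = (m : ℤ) := by
  rw [Int.floor_eq_iff]
  have hn0 : (0 : ℝ) ≤ (n : ℝ) + 1 / 4 := by positivity
  constructor
  · have hle : ((m : ℝ) + 1 / 2) ≤ Real.sqrt ((n : ℝ) + 1 / 4) := by
      rw [Real.le_sqrt (by positivity) hn0]
      have : ((m : ℝ) * (m + 1)) ≤ (n : ℝ) := by exact_mod_cast h1
      nlinarith
    push_cast
    linarith
  · have hlt : Real.sqrt ((n : ℝ) + 1 / 4) < (m : ℝ) + 3 / 2 := by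
      rw [Real.sqrt_lt' (by positivity)]
      have : (n : ℝ) < ((m : ℝ) + 1) * ((m : ℝ) + 2) := by exact_mod_cast h2
      nlinarith
    push_cast
    linarith


theorem card_S_formula (n : ℕ) (hn : 0 < n)
    (S : Finset ℕ) (hS : S = (Finset.Icc 1 n).filter (fun k => n / (k + 1) < n / k)) :
    (S.card : ℤ) = Nat.sqrt n + ⌊Real.sqrt ((n : ℝ) + 1 / 4) - 1 / 2⌋ := by
  set s := Nat.sqrt n with hs
  set m := n / (s + 1) with hm
  have hs1 : 1 ≤ s := by
    by_contra h
    have h0 : s = 0 := by omega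
    have := Nat.lt_succ_sqrt n
    rw [← hs, h0] at this
    omega
  have hssq : s * s ≤ n := Nat.sqrt_le n
  have hlt : n < (s + 1) * (s + 1) := Nat.lt_succ_sqrt n
  have hsn : s ≤ n := Nat.sqrt_le_self n
  have hms : (s + 1) * m ≤ n := by
    rw [hm, mul_comm]
    exact Nat.div_mul_le_self n (s + 1)
  have hmod : (s + 1) * m + n % (s + 1) = n := by
    rw [hm]
    exact Nat.div_add_mod n (s + 1)
  have hmodlt : n % (s + 1) < s + 1 := Nat.mod_lt n (by omega)
  have hm_le_s : m ≤ s := by nlinarith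
  have hm_ge : s ≤ m + 1 := by
    obtain ⟨t, ht⟩ : ∃ t, s = t + 1 := ⟨s - 1, by omega⟩
    have h9 : t ≤ m := by
      rw [hm, Nat.le_div_iff_mul_le (by omega)]
      nlinarith [ht]
    omega
  have key1 : m * (m + 1) ≤ n := by nlinarith
  have key2 : n < (m + 1) * (m + 2) := by nlinarith
  have hsm1 : s * (m + 1) ≤ n := by
    rcases le_or_gt s m with h | h
    · nlinarith
    · nlinarith
  subst hS
  rw [S_eq_image n hn]
  have hsplit : Finset.Icc 1 n = Finset.Icc 1 s ∪ Finset.Icc (s + 1) n := by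
    ext x
    simp only [mem_Icc, mem_union]
    omega
  rw [hsplit, Finset.image_union]
  have himage_high : (Finset.Icc (s + 1) n).image (fun v => n / v) = Finset.Icc 1 m := by
    ext w
    simp only [mem_image, mem_Icc]
    constructor
    · rintro ⟨v, ⟨hv1, hv2⟩, rfl⟩
      exact ⟨(Nat.one_le_div_iff (by omega)).mpr hv2, Nat.div_le_div_left hv1 (by omega)⟩
    · rintro ⟨hw1, hw2⟩
      refine ⟨n / w, ⟨?_, Nat.div_le_self n w⟩, ?_⟩
      · rw [Nat.le_div_iff_mul_le (by omega)]
        have h4 : w * (s + 1) ≤ n := (Nat.le_div_iff_mul_le (by omega)).mp hw2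
        linarith
      · exact div_div_eq (by omega) (by nlinarith)
  rw [himage_high]
  have hbound : ∀ a ∈ (Finset.Icc 1 s).image (fun v => n / v), m + 1 ≤ a := by
    intro a ha
    simp only [mem_image, mem_Icc] at ha
    obtain ⟨v, ⟨hv1, hv2⟩, rfl⟩ := ha
    calc m + 1 ≤ n / s := (Nat.le_div_iff_mul_le (by omega)).mpr (by linarith)
    _ ≤ n / v := Nat.div_le_div_left hv2 (by omega)
  have hdisj : Disjoint ((Finset.Icc 1 s).image (fun v => n / v)) (Finset.Icc 1 m) := by
    rw [Finset.disjoint_left]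
    intro a ha ha2
    have := hbound a ha
    simp only [mem_Icc] at ha2
    omega
  rw [Finset.card_union_of_disjoint hdisj, Finset.card_image_of_injOn, Nat.card_Icc,
    Nat.card_Icc]
  · rw [floor_aux n m key1 key2]
    push_cast
    ring
  · intro a ha b hb hab
    simp only [Finset.coe_Icc, Set.mem_Icc] at ha hb
    by_contra hne
    have hmono : ∀ x y : ℕ, 1 ≤ x → x < y → y ≤ s → n / y < n / x := by
      intro x y hx hxy hy
      calc n / y ≤ n / (x + 1) := Nat.div_le_div_left (by omega) (by omega)
      _ < n / x := drop_lemma (by omega)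
        (le_trans (Nat.mul_le_mul (show x ≤ s by omega) (show x + 1 ≤ s by omega)) hssq)
    have hab' : n / a = n / b := hab
    rcases lt_trichotomy a b with h | h | h
    · have := hmono a b ha.1 h hb.2
      omega
    · exact hne h
    · have := hmono b a hb.1 h ha.2
      omega
end

section
/- Fix a positive integer n and define the m × m matrices U = (⌊n/(s_a s_b)⌋) and 𝓜 = (M(⌊n/(s_a s_b)⌋)) over the increasing enumeration s₁ < … < s_m of S = { k : 1 ≤ k ≤ n and ⌊n/(k+1)⌋ < ⌊n/k⌋ }, where M is the Mertens function with M(0) = 0. Let T be the m × m 0-1 matrix with T_{a,b} = 1 iff a + b ≤ m + 1 (ones on and above the antidiagonal). Then, over the rationals, 𝓜 = T U⁻¹ T; in particular U is invertible. -/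
/-!
The values `⌊n / j⌋` for `1 ≤ j ≤ n` are exactly the elements of `S`, and `k ↦ ⌊n / k⌋` is an
order-reversing involution of `S`, so `s (rev a) = ⌊n / s a⌋`. Let `N a c` count the `d ≤ n` with
`⌊n / (s a * d)⌋ = s c`. Grouping the `d` by this value gives `U = N * L`, with `L` the lower
triangular all-ones matrix, and, through `∑_{d ≤ x} M ⌊x / d⌋ = 1` for `x ≥ 1`, also `N * M' = T`
where `M' c b = M ⌊s c / s b⌋`. With `R` the reversal permutation matrix, `T = R * L` and
`𝓜 = R * M'`, hence `𝓜 = R * N⁻¹ * T = T * U⁻¹ * T`.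
-/

open Finset

def mertens (x : ℕ) : ℤ := ∑ d ∈ Icc 1 x, ArithmeticFunction.moebius d

theorem mertens_zero : mertens 0 = 0 := rfl

theorem sum_mertens_div (K : ℕ) :
    ∑ d ∈ Icc 1 K, mertens (K / d) = if 0 < K then 1 else 0 := by
  have h := ArithmeticFunction.sum_Ioc_mul_eq_sum_sum
    (ArithmeticFunction.zeta : ArithmeticFunction ℤ) ArithmeticFunction.moebius K
  rw [ArithmeticFunction.coe_zeta_mul_moebius] at h
  simp only [← Icc_add_one_left_eq_Ioc, zero_add] at h
  convert h.symm using 1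
  · refine sum_congr rfl fun d hd => ?_
    rw [ArithmeticFunction.natCoe_apply, ArithmeticFunction.zeta_apply,
      if_neg (by simp at hd; omega)]
    simp [mertens]
  · simp [ArithmeticFunction.one_apply, Nat.one_le_iff_ne_zero, pos_iff_ne_zero]

theorem sum_mertens_div_of_le {K N : ℕ} (h : K ≤ N) :
    ∑ d ∈ Icc 1 N, mertens (K / d) = if 0 < K then 1 else 0 := by
  rw [← sum_mertens_div, sum_subset (Icc_subset_Icc_right h)]
  intro d hd hdK
  rw [Nat.div_eq_of_lt (by simp_all), mertens_zero]

def lowerOnes (ι R : Type*) [LinearOrder ι] [Zero R] [One R] : Matrix ι ι R :=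
  Matrix.of fun i j => if j ≤ i then 1 else 0

theorem isUnit_lowerOnes (ι R : Type*) [LinearOrder ι] [Fintype ι] [CommRing R] :
    IsUnit (lowerOnes ι R) := by
  rw [Matrix.isUnit_iff_isUnit_det, Matrix.det_of_isLowerTriangular]
  · simp [lowerOnes]
  · intro i j hij
    simp [lowerOnes, not_le.2 (OrderDual.toDual_lt_toDual.1 hij)]

theorem isUnit_permMatrix {ι R : Type*} [Fintype ι] [DecidableEq ι] [CommRing R]
    (σ : Equiv.Perm ι) : IsUnit (σ.permMatrix R) := by
  rw [Matrix.isUnit_iff_isUnit_det, Matrix.det_permutation]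
  exact (Equiv.Perm.sign σ).isUnit.map (Int.castRingHom R)

theorem isUnit_mul_and_eq_mul_inv_mul {ι K : Type*} [Fintype ι] [DecidableEq ι] [CommRing K]
    {N L P A : Matrix ι ι K} (hP : IsUnit P) (hL : IsUnit L) (h : N * A = P * L) :
    IsUnit (N * L) ∧ P * A = P * L * (N * L)⁻¹ * (P * L) := by
  rw [Matrix.isUnit_iff_isUnit_det] at hP hL ⊢
  have hN : IsUnit N.det :=
    isUnit_of_mul_isUnit_left (by rw [← Matrix.det_mul, h, Matrix.det_mul]; exact hP.mul hL)
  refine ⟨by rw [Matrix.det_mul]; exact hN.mul hL, ?_⟩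
  have hA : A = N⁻¹ * (P * L) := by rw [← h, Matrix.nonsing_inv_mul_cancel_left (h := hN)]
  rw [Matrix.mul_inv_rev, hA]
  simp only [mul_assoc, Matrix.mul_nonsing_inv_cancel_left (h := hL)]

def quotientSet (n : ℕ) : Finset ℕ := {k ∈ Icc 1 n | n / (k + 1) < n / k}

theorem div_mem_quotientSet {n j : ℕ} (hj : 0 < j) (hjn : j ≤ n) : n / j ∈ quotientSet n := by
  have hk : 0 < n / j := Nat.div_pos hjn hj
  have hj_le : j ≤ n / (n / j) := (Nat.le_div_iff_mul_le hk).2 (Nat.mul_div_le n j)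
  have hlt : n / (n / j + 1) < j := (Nat.div_lt_iff_lt_mul (by omega)).2 (Nat.lt_mul_div_succ n hj)
  simp only [quotientSet, mem_filter, mem_Icc]
  exact ⟨⟨hk, Nat.div_le_self n j⟩, by omega⟩

theorem div_div_of_mem_quotientSet {n k : ℕ} (hk : k ∈ quotientSet n) : n / (n / k) = k := by
  simp only [quotientSet, mem_filter, mem_Icc] at hk
  obtain ⟨⟨hk1, -⟩, hlt⟩ := hk
  have hq : 0 < n / k := (Nat.zero_le _).trans_lt hlt
  have h1 : k ≤ n / (n / k) := (Nat.le_div_iff_mul_le hq).2 (Nat.mul_div_le n k)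
  have h2 : n / (n / k) < k + 1 := (Nat.div_lt_iff_lt_mul hq).2 (by
    rw [mul_comm]; exact (Nat.div_lt_iff_lt_mul k.succ_pos).1 hlt)
  omega

theorem div_mem_insert_zero_quotientSet (n j : ℕ) : n / j ∈ insert 0 (quotientSet n) := by
  rcases Nat.eq_zero_or_pos j with rfl | hj
  · simp
  rcases le_or_gt j n with hjn | hnj
  · exact mem_insert_of_mem (div_mem_quotientSet hj hjn)
  · simp [Nat.div_eq_of_lt hnj]

theorem zero_notMem_quotientSet (n : ℕ) : 0 ∉ quotientSet n := by
  simp [quotientSet]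

theorem pos_of_mem_quotientSet {n k : ℕ} (hk : k ∈ quotientSet n) : 0 < k := by
  simp only [quotientSet, mem_filter, mem_Icc] at hk; omega

theorem le_of_mem_quotientSet {n k : ℕ} (hk : k ∈ quotientSet n) : k ≤ n := by
  simp only [quotientSet, mem_filter, mem_Icc] at hk; omega

theorem card_filter_le_div {K N x : ℕ} (hKN : K ≤ N) (hx : 0 < x) :
    #{d ∈ Icc 1 N | x ≤ K / d} = K / x := by
  have hfilter : {d ∈ Icc 1 N | x ≤ K / d} = Icc 1 (K / x) := by
    ext d
    simp only [mem_filter, mem_Icc]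
    constructor
    · rintro ⟨⟨hd, -⟩, h⟩
      exact ⟨hd, (Nat.le_div_iff_mul_le hx).2 (mul_comm x d ▸ (Nat.le_div_iff_mul_le hd).1 h)⟩
    · rintro ⟨hd, h⟩
      have hdx := (Nat.le_div_iff_mul_le hx).1 h
      refine ⟨⟨hd, ?_⟩, (Nat.le_div_iff_mul_le hd).2 (mul_comm d x ▸ hdx)⟩
      nlinarith
  rw [hfilter, Nat.card_Icc, Nat.add_sub_cancel]

def quotientCount {m : ℕ} (n : ℕ) (s : Fin m → ℕ) : Matrix (Fin m) (Fin m) ℚ :=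
  Matrix.of fun a c => #{d ∈ Icc 1 n | n / (s a * d) = s c}

section Enumeration

variable {n m : ℕ} {s : Fin m → ℕ}

theorem apply_mem_quotientSet (hrange : Set.range s = quotientSet n) (a : Fin m) :
    s a ∈ quotientSet n :=
  mem_coe.1 (hrange ▸ Set.mem_range_self a)

theorem exists_apply_eq_div (hrange : Set.range s = quotientSet n) {j : ℕ} (hj : 0 < j)
    (hjn : j ≤ n) : ∃ c, s c = n / j :=
  (hrange ▸ mem_coe.2 (div_mem_quotientSet hj hjn) : n / j ∈ Set.range s)

theorem apply_rev (hmono : StrictMono s) (hrange : Set.range s = quotientSet n) (a : Fin m) :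
    s a.rev = n / s a := by
  have hmem := apply_mem_quotientSet hrange
  have hinvol : ∀ a, n / (n / s a) = s a := fun a => div_div_of_mem_quotientSet (hmem a)
  have hmono' : StrictMono fun a : Fin m => n / s a.rev := by
    intro a b hab
    refine (Nat.div_le_div_left (hmono.monotone (Fin.rev_le_rev.2 hab.le))
      (pos_of_mem_quotientSet (hmem _))).lt_of_ne fun h => hab.ne ?_
    have := congrArg (n / ·) h
    simp only [hinvol] at this
    exact Fin.rev_injective (hmono.injective this)
  have hrange' : Set.range (fun a : Fin m => n / s a.rev) = Set.range s := by
    ext k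
    constructor
    · rintro ⟨a, rfl⟩
      exact exists_apply_eq_div hrange (pos_of_mem_quotientSet (hmem _))
        (le_of_mem_quotientSet (hmem _))
    · rintro ⟨c, rfl⟩
      obtain ⟨c', hc'⟩ := exists_apply_eq_div hrange (pos_of_mem_quotientSet (hmem c))
        (le_of_mem_quotientSet (hmem c))
      exact ⟨c'.rev, by simp [hc', hinvol]⟩
  -- both functions enumerate `quotientSet n` increasingly
  simpa using (congrFun ((hmono'.range_inj hmono).1 hrange') a.rev).symm

theorem div_mul_pos_iff (hmono : StrictMono s) (hrange : Set.range s = quotientSet n)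
    (a b : Fin m) : 0 < n / (s a * s b) ↔ b ≤ a.rev := by
  have hpos := fun c => pos_of_mem_quotientSet (apply_mem_quotientSet hrange c)
  rw [Nat.div_pos_iff, and_iff_right (Nat.mul_pos (hpos a) (hpos b)), ← hmono.le_iff_le,
    apply_rev hmono hrange, Nat.le_div_iff_mul_le (hpos a), mul_comm]

theorem sum_div_eq_sum_card_smul {ι K : Type*} [AddCommMonoid K] (hmono : StrictMono s)
    (hrange : Set.range s = quotientSet n) (D : Finset ι) (j : ι → ℕ) {F : ℕ → K}
    (hF : F 0 = 0) :
    ∑ i ∈ D, F (n / j i) = ∑ c, #{i ∈ D | n / j i = s c} • F (s c) := by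
  have himage : quotientSet n = univ.image s := by
    rw [← coe_inj, coe_image, coe_univ, Set.image_univ, hrange]
  rw [← sum_fiberwise_of_maps_to (fun i _ => div_mem_insert_zero_quotientSet n (j i)),
    sum_insert (zero_notMem_quotientSet n), himage, sum_image hmono.injective.injOn]
  rw [sum_eq_zero fun i hi => by rw [(mem_filter.1 hi).2, hF], zero_add]
  refine sum_congr rfl fun c _ => ?_
  rw [sum_congr rfl fun i hi => by rw [(mem_filter.1 hi).2], sum_const]

theorem quotientCount_mul_lowerOnes (hmono : StrictMono s) (hrange : Set.range s = quotientSet n) :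
    quotientCount n s * lowerOnes (Fin m) ℚ =
      Matrix.of fun a c => ((n / (s a * s c) : ℕ) : ℚ) := by
  ext a c
  have hpos := fun c => pos_of_mem_quotientSet (apply_mem_quotientSet hrange c)
  have key := sum_div_eq_sum_card_smul hmono hrange (Icc 1 n) (s a * ·)
    (F := fun y => if s c ≤ y then (1 : ℚ) else 0) (by simp [(hpos c).ne'])
  simp only [hmono.le_iff_le, nsmul_eq_mul, sum_boole] at key
  simp only [Matrix.mul_apply, quotientCount, lowerOnes, Matrix.of_apply]
  rw [← key]
  simp only [← Nat.div_div_eq_div_mul, card_filter_le_div (Nat.div_le_self n (s a)) (hpos c)]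

theorem quotientCount_mul_mertens (hmono : StrictMono s) (hrange : Set.range s = quotientSet n) :
    quotientCount n s * Matrix.of (fun c b => (mertens (s c / s b) : ℚ)) =
      Matrix.of fun a b => if b ≤ a.rev then 1 else 0 := by
  ext a b
  have key := sum_div_eq_sum_card_smul hmono hrange (Icc 1 n) (s a * ·)
    (F := fun y => (mertens (y / s b) : ℚ)) (by simp [mertens_zero])
  simp only [nsmul_eq_mul, Nat.div_div_eq_div_mul, mul_right_comm (s a) _ (s b)] at key
  simp only [Matrix.mul_apply, quotientCount, Matrix.of_apply]
  simp_rw [← key, ← Int.cast_sum, ← Nat.div_div_eq_div_mul n (s a * s b)]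
  rw [sum_mertens_div_of_le (Nat.div_le_self _ _)]
  simp [div_mul_pos_iff hmono hrange]

end Enumeration

theorem M_eq_T_Uinv_T_general (n : ℕ)
    (S : Finset ℕ) (hS : S = (Finset.Icc 1 n).filter (fun k => n / (k + 1) < n / k))
    (m : ℕ) (hm : S.card = m)
    (s : Fin m → ℕ) (hs : ∀ a, s a = (S.orderIsoOfFin hm a : ℕ))
    (M : ℕ → ℤ) (hM : ∀ l, M l = ∑ d ∈ Finset.Icc 1 l, ArithmeticFunction.moebius d)
    (U : Matrix (Fin m) (Fin m) ℚ) (hU : ∀ a b, U a b = (n / (s a * s b) : ℕ))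
    (Mmat : Matrix (Fin m) (Fin m) ℚ) (hMmat : ∀ a b, Mmat a b = (M (n / (s a * s b)) : ℚ))
    (T : Matrix (Fin m) (Fin m) ℚ)
    (hT : ∀ a b, T a b = if (a : ℕ) + 1 + ((b : ℕ) + 1) ≤ m + 1 then 1 else 0) :
    IsUnit U ∧ Mmat = T * U⁻¹ * T := by
  subst hS
  have hse : s = (quotientSet n).orderEmbOfFin hm := funext fun a => by
    rw [hs, Finset.coe_orderIsoOfFin_apply]; rfl
  have hmono : StrictMono s := hse ▸ ((quotientSet n).orderEmbOfFin hm).strictMono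
  have hrange : Set.range s = quotientSet n := hse ▸ (quotientSet n).range_orderEmbOfFin hm
  obtain rfl : M = mertens := funext hM
  have hrev (A : Matrix (Fin m) (Fin m) ℚ) :
      Fin.revPerm.permMatrix ℚ * A = A.submatrix Fin.rev id :=
    PEquiv.toMatrix_toPEquiv_mul _ _
  have hU' : U = quotientCount n s * lowerOnes (Fin m) ℚ := by
    rw [quotientCount_mul_lowerOnes hmono hrange]; exact Matrix.ext hU
  have hMmat' :
      Mmat = Fin.revPerm.permMatrix ℚ * Matrix.of fun c b => (mertens (s c / s b) : ℚ) := by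
    ext a b
    simp [hrev, hMmat, apply_rev hmono hrange, Nat.div_div_eq_div_mul]
  have hT' : T = Fin.revPerm.permMatrix ℚ * lowerOnes (Fin m) ℚ := by
    ext a b
    simp only [hT, hrev, lowerOnes, Matrix.submatrix_apply, Matrix.of_apply, id, Fin.le_def,
      Fin.val_rev]
    congr 1; apply propext; omega
  rw [hU', hMmat', hT']
  refine isUnit_mul_and_eq_mul_inv_mul (isUnit_permMatrix _) (isUnit_lowerOnes _ _) ?_
  rw [quotientCount_mul_mertens hmono hrange, hrev]
  ext a b
  simp [lowerOnes]

theorem M_eq_T_Uinv_T (n : ℕ) (hn : 0 < n)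
    (S : Finset ℕ) (hS : S = (Finset.Icc 1 n).filter (fun k => n / (k + 1) < n / k))
    (m : ℕ) (hm : S.card = m)
    (s : Fin m → ℕ) (hs : ∀ a, s a = (S.orderIsoOfFin hm a : ℕ))
    (M : ℕ → ℤ) (hM : ∀ l, M l = ∑ d ∈ Finset.Icc 1 l, ArithmeticFunction.moebius d)
    (U : Matrix (Fin m) (Fin m) ℚ) (hU : ∀ a b, U a b = (n / (s a * s b) : ℕ))
    (Mmat : Matrix (Fin m) (Fin m) ℚ) (hMmat : ∀ a b, Mmat a b = (M (n / (s a * s b)) : ℚ))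
    (T : Matrix (Fin m) (Fin m) ℚ)
    (hT : ∀ a b, T a b = if (a : ℕ) + 1 + ((b : ℕ) + 1) ≤ m + 1 then 1 else 0) :
    IsUnit U ∧ Mmat = T * U⁻¹ * T :=
  M_eq_T_Uinv_T_general n S hS m hm s hs M hM U hU Mmat hMmat T hT
end
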